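/- arXiv:2308.10198 — 2 statements merged into one kernel-verified Lean document; each statement's English description precedes it below -/
import Mathlib

section
/- Forced row in wire preimages: if x : ℤ² → Bool satisfies x(j,1) = true for all j ∈ {0,1,2,3}, x(j,0) = false for all j ∈ {0,1,2,3}, and g(x)(v) = true for all v ∈ {1,2}×{1,2}, then x(1,2) = x(2,2) = false. -/
/-- Number of live cells in the 3×3 block centered at `v` (including `v` itself). -/
noncomputable def liveCount (x : ℤ × ℤ → Bool) (v : ℤ × ℤ) : ℕ :=
  ((Finset.Icc (-1 : ℤ) 1 ×ˢ Finset.Icc (-1 : ℤ) 1).filter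
    (fun w => x (v.1 + w.1, v.2 + w.2))).card

/-- Conway's Game of Life: a cell is alive in `gol x` iff it is dead in `x` with exactly
3 live cells in its 3×3 neighborhood, or alive in `x` with 3 or 4 live cells in its
3×3 neighborhood (i.e. 2 or 3 live neighbors besides itself). -/
noncomputable def gol (x : ℤ × ℤ → Bool) : ℤ × ℤ → Bool :=
  fun v => if x v then decide (liveCount x v = 3 ∨ liveCount x v = 4)
           else decide (liveCount x v = 3)

/-- The shift map `σ^v`. -/
def shift (v : ℤ × ℤ) (x : ℤ × ℤ → Bool) : ℤ × ℤ → Bool :=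
  fun w => x (w + v)

lemma lc (x : ℤ × ℤ → Bool) (a b : ℤ) : liveCount x (a, b) =
    (x (a-1, b-1)).toNat + (x (a-1, b)).toNat + (x (a-1, b+1)).toNat +
    (x (a, b-1)).toNat + (x (a, b)).toNat + (x (a, b+1)).toNat +
    (x (a+1, b-1)).toNat + (x (a+1, b)).toNat + (x (a+1, b+1)).toNat := by
  have h : (Finset.Icc (-1 : ℤ) 1 ×ˢ Finset.Icc (-1 : ℤ) 1) =
      ({(-1,-1),(-1,0),(-1,1),(0,-1),(0,0),(0,1),(1,-1),(1,0),(1,1)} : Finset (ℤ × ℤ)) := by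
    decide
  have e : ∀ c : Bool, (if c = true then 1 else 0 : ℕ) = c.toNat := by
    intro c; cases c <;> rfl
  rw [liveCount, h, Finset.card_filter]
  rw [Finset.sum_insert (by decide), Finset.sum_insert (by decide),
      Finset.sum_insert (by decide), Finset.sum_insert (by decide),
      Finset.sum_insert (by decide), Finset.sum_insert (by decide),
      Finset.sum_insert (by decide), Finset.sum_insert (by decide),
      Finset.sum_singleton]
  simp only [e, sub_eq_add_neg, add_zero]
  ring

theorem forced_row_in_wire_preimage (x : ℤ × ℤ → Bool)
    (h1 : ∀ j : ℤ, 0 ≤ j → j ≤ 3 → x (j, 1) = true)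
    (h0 : ∀ j : ℤ, 0 ≤ j → j ≤ 3 → x (j, 0) = false)
    (himg : ∀ v : ℤ × ℤ, v.1 = 1 ∨ v.1 = 2 → v.2 = 1 ∨ v.2 = 2 → gol x v = true) :
    x (1, 2) = false ∧ x (2, 2) = false := by
  have a00 : x (0, 0) = false := h0 0 (by norm_num) (by norm_num)
  have a10 : x (1, 0) = false := h0 1 (by norm_num) (by norm_num)
  have a20 : x (2, 0) = false := h0 2 (by norm_num) (by norm_num)
  have a30 : x (3, 0) = false := h0 3 (by norm_num) (by norm_num)
  have a01 : x (0, 1) = true := h1 0 (by norm_num) (by norm_num)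
  have a11 : x (1, 1) = true := h1 1 (by norm_num) (by norm_num)
  have a21 : x (2, 1) = true := h1 2 (by norm_num) (by norm_num)
  have a31 : x (3, 1) = true := h1 3 (by norm_num) (by norm_num)
  have a00' : x (0 : ℤ × ℤ) = false := a00
  have a11' : x (1 : ℤ × ℤ) = true := a11
  have e11 := himg (1, 1) (Or.inl rfl) (Or.inl rfl)
  have e21 := himg (2, 1) (Or.inr rfl) (Or.inl rfl)
  have e12 := himg (1, 2) (Or.inl rfl) (Or.inr rfl)
  have e22 := himg (2, 2) (Or.inr rfl) (Or.inr rfl)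
  rw [gol] at e11 e21 e12 e22
  rw [lc] at e11 e21 e12 e22
  norm_num at e11 e21 e12 e22
  cases h12 : x (1, 2) <;> cases h22 : x (2, 2)
  · exact ⟨rfl, rfl⟩
  · -- x(1,2)=false, x(2,2)=true
    exfalso
    simp only [h12, h22, a00, a10, a20, a30, a01, a11, a21, a31, a00', a11',
      Bool.toNat_true, Bool.toNat_false, eq_self_iff_true, if_true, if_false,
      Bool.false_eq_true, decide_eq_true_eq] at e11 e21 e12 e22
    omega
  · -- x(1,2)=true, x(2,2)=false
    exfalso
    simp only [h12, h22, a00, a10, a20, a30, a01, a11, a21, a31, a00', a11',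
      Bool.toNat_true, Bool.toNat_false, eq_self_iff_true, if_true, if_false,
      Bool.false_eq_true, decide_eq_true_eq] at e11 e21 e12 e22
    omega
  · -- both true
    exfalso
    simp only [h12, h22, a00, a10, a20, a30, a01, a11, a21, a31, a00', a11',
      Bool.toNat_true, Bool.toNat_false, eq_self_iff_true, if_true, if_false,
      Bool.false_eq_true, decide_eq_true_eq] at e11
    omega
end

section
/- In any preimage of an all-live 2×2 image block with a W_1 signal below, the signal determines the next row: if x : ℤ² → Bool satisfies x(j,0) = false and x(j,1) = true for all j ∈ {0,1,2,3}, and g(x)(1,1) = g(x)(2,1) = g(x)(1,2) = g(x)(2,2) = true, then x(j,2) = false for all j ∈ {1,2} and x(j,3) is forced: specifically x(1,2) = x(2,2) = false (the W_2 phase appears at height 2). [This is the i = 1 case of the wire-propagation case analysis.] -/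
lemma sum_three (f : ℤ → ℕ) : ∑ y ∈ ({-1,0,1} : Finset ℤ), f y = f (-1) + f 0 + f 1 := by
  rw [show ({-1,0,1} : Finset ℤ) = insert (-1) (insert 0 {1}) from rfl,
    Finset.sum_insert (by decide), Finset.sum_insert (by decide), Finset.sum_singleton]
  ring_nf

lemma liveCount_eq (x : ℤ × ℤ → Bool) (v : ℤ × ℤ) :
    liveCount x v =
      (x (v.1-1, v.2-1)).toNat + (x (v.1, v.2-1)).toNat + (x (v.1+1, v.2-1)).toNat +
      (x (v.1-1, v.2)).toNat + (x (v.1, v.2)).toNat + (x (v.1+1, v.2)).toNat +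
      (x (v.1-1, v.2+1)).toNat + (x (v.1, v.2+1)).toNat + (x (v.1+1, v.2+1)).toNat := by
  rw [liveCount, Finset.card_filter,
    show Finset.Icc (-1:ℤ) 1 = {-1,0,1} from by decide, Finset.sum_product, sum_three]
  simp only [sum_three]
  simp only [Bool.toNat, Bool.cond_eq_ite, sub_eq_add_neg, neg_add_rev,
    show (v.1, v.2) = v from rfl]
  ring_nf

theorem w1_signal_forces_w2 (x : ℤ × ℤ → Bool)
    (h0 : ∀ j : ℤ, 0 ≤ j → j ≤ 3 → x (j, 0) = false)
    (h1 : ∀ j : ℤ, 0 ≤ j → j ≤ 3 → x (j, 1) = true)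
    (himg : gol x (1, 1) = true ∧ gol x (2, 1) = true ∧
            gol x (1, 2) = true ∧ gol x (2, 2) = true) :
    x (1, 2) = false ∧ x (2, 2) = false := by
  obtain ⟨g11, g21, g12, g22⟩ := himg
  have e00 := h0 0 (by norm_num) (by norm_num)
  have e10 := h0 1 (by norm_num) (by norm_num)
  have e20 := h0 2 (by norm_num) (by norm_num)
  have e30 := h0 3 (by norm_num) (by norm_num)
  have e01 := h1 0 (by norm_num) (by norm_num)
  have e11 := h1 1 (by norm_num) (by norm_num)
  have e21 := h1 2 (by norm_num) (by norm_num)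
  have e31 := h1 3 (by norm_num) (by norm_num)
  simp only [gol, liveCount_eq] at g11 g21 g12 g22
  norm_num [e00, e10, e20, e30, e01, e11, e21, e31] at g11 g21 g12 g22
  have b02 := Bool.toNat_le (x (0, 2))
  have b12 := Bool.toNat_le (x (1, 2))
  have b22 := Bool.toNat_le (x (2, 2))
  have b32 := Bool.toNat_le (x (3, 2))
  have b03 := Bool.toNat_le (x (0, 3))
  have b13 := Bool.toNat_le (x (1, 3))
  have b23 := Bool.toNat_le (x (2, 3))
  have b33 := Bool.toNat_le (x (3, 3))
  constructor <;> [cases h : x (1, 2); cases h : x (2, 2)] <;> simp_all <;>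
    (try split at g12) <;> (try split at g22) <;>
    (try rcases g11 with g11 | g11) <;> (try rcases g21 with g21 | g21) <;>
    (try rcases g12 with g12 | g12) <;> (try rcases g22 with g22 | g22) <;> omega
end
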